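/- arXiv:1910.12473 — 4 statements merged into one kernel-verified Lean document; each statement's English description precedes it below -/
import Mathlib

section
/- Let m, l be positive integers, ε > 0 a real number with εm an integer, and P_l = (v_0, v_1, ..., v_l) a path. Let L be a list assignment with |L(v_0)| = m and |L(v_i)| = 2m + εm for 1 ≤ i ≤ l. Then for each 0 ≤ j ≤ l there exists a subset T_j ⊆ L(v_j) such that: (1) if j = 2t+1 is odd then |T_j| = m + εm, and if j = 2t is even then |T_j| = m; (2) for any m-element subset B_j of L(v_j) with |B_j ∩ T_j| ≥ (1 - tε)m (where t = ⌊j/2⌋), there exists an m-fold L-colouring φ of the subpath (v_0, ..., v_j) with φ(v_j) = B_j. -/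
/-- `φ` is an `m`-fold `L`-colouring of the path `(v_0, v_1, ..., v_l)`
(vertices indexed by `0, ..., l`): each vertex gets an `m`-element subset of
its list, and consecutive vertices get disjoint sets. -/
def PathCol (l m : ℕ) (L φ : ℕ → Finset ℕ) : Prop :=
  (∀ i ≤ l, φ i ⊆ L i ∧ (φ i).card = m) ∧ ∀ i < l, Disjoint (φ i) (φ (i + 1))

/-- Lemma 1: lists of size `m` at `v_0` and `2m + εm` elsewhere. For each `j ≤ l`
there is a set `T_j ⊆ L(v_j)` of size `m + εm` (`j` odd) or `m` (`j` even) such that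
every `m`-subset `B` of `L(v_j)` with `|B ∩ T_j| ≥ (1 - tε)m` (where `t = ⌊j/2⌋`) is the
colour set of `v_j` in some `m`-fold `L`-colouring of `(v_0, ..., v_j)`. -/
theorem stmt_1 (m l : ℕ) (hm : 0 < m) (hl : 0 < l) (ε : ℝ) (hε : 0 < ε)
    (em : ℕ) (hem : (em : ℝ) = ε * m)
    (L : ℕ → Finset ℕ) (hL0 : (L 0).card = m)
    (hL : ∀ i, 1 ≤ i → i ≤ l → (L i).card = 2 * m + em) :
    ∀ j ≤ l, ∃ T ⊆ L j,
      ((Odd j → T.card = m + em) ∧ (Even j → T.card = m)) ∧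
      ∀ B ⊆ L j, B.card = m →
        ((1 - (j / 2 : ℕ) * ε) * m ≤ ((B ∩ T).card : ℝ)) →
        ∃ φ : ℕ → Finset ℕ, PathCol j m L φ ∧ φ j = B := by
  intro j
  induction j with
  | zero =>
    intro _
    refine ⟨L 0, Finset.Subset.refl _, ⟨fun h => absurd h (by simp), fun _ => hL0⟩, ?_⟩
    intro B hB hBcard _
    refine ⟨fun _ => B, ⟨?_, ?_⟩, rfl⟩
    · intro i hi
      have h0 : i = 0 := Nat.le_zero.mp hi
      subst h0
      exact ⟨hB, hBcard⟩
    · intro i hi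
      exact absurd hi (Nat.not_lt_zero i)
  | succ j ih =>
    intro hj1
    have hj : j ≤ l := Nat.le_of_succ_le hj1
    obtain ⟨T, hT, ⟨hTodd, hTeven⟩, hTcol⟩ := ih hj
    -- size of T : m if j even, m + em if j odd
    have hTcard : T.card ≤ m + em := by
      rcases Nat.even_or_odd j with he | ho
      · have := hTeven he; omega
      · have := hTodd ho; omega
    have hLj1 : (L (j+1)).card = 2 * m + em := hL (j+1) (Nat.succ_le_succ (Nat.zero_le j)) hj1
    -- choose T' ⊆ L (j+1) \ T of the right size
    set tgt : ℕ := if Even (j+1) then m else m + em with htgt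
    have htgt_le : tgt ≤ (L (j+1) \ T).card := by
      have h1 : (L (j+1)).card - T.card ≤ (L (j+1) \ T).card := Finset.le_card_sdiff T _
      rcases Nat.even_or_odd j with he | ho
      · have hTc := hTeven he
        have : ¬ Even (j+1) := by simp [Nat.even_add_one, he]
        simp only [htgt, if_neg this]
        omega
      · have hTc := hTodd ho
        have : Even (j+1) := Odd.add_one ho
        simp only [htgt, if_pos this]
        omega
    obtain ⟨T', hT'sub, hT'card⟩ := Finset.exists_subset_card_eq htgt_le
    have hT'L : T' ⊆ L (j+1) := hT'sub.trans (Finset.sdiff_subset)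
    have hdisj : Disjoint T' T := Finset.disjoint_of_subset_left hT'sub (Finset.sdiff_disjoint)
    refine ⟨T', hT'L, ⟨?_, ?_⟩, ?_⟩
    · intro hodd
      have : ¬ Even (j+1) := Nat.not_even_iff_odd.mpr hodd
      rw [hT'card, htgt, if_neg this]
    · intro heven
      rw [hT'card, htgt, if_pos heven]
    intro B hB hBcard hBT'
    -- key cardinality estimates
    have hm0 : (0:ℝ) ≤ (m:ℝ) := Nat.cast_nonneg m
    have hunion : (B ∩ T).card + (B ∩ T').card ≤ m := by
      have hd : Disjoint (B ∩ T) (B ∩ T') :=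
        Finset.disjoint_of_subset_left (Finset.inter_subset_right)
          (Finset.disjoint_of_subset_right (Finset.inter_subset_right) hdisj.symm)
      calc (B ∩ T).card + (B ∩ T').card = ((B ∩ T) ∪ (B ∩ T')).card :=
            (Finset.card_union_of_disjoint hd).symm
        _ ≤ B.card := Finset.card_le_card (by
            intro x hx; rcases Finset.mem_union.mp hx with h | h
            exacts [Finset.mem_inter.mp h |>.1, Finset.mem_inter.mp h |>.1])
        _ = m := hBcard
    have hsd : (T \ B).card + (T ∩ B).card = T.card := Finset.card_sdiff_add_card_inter T B
    have hTB : (T ∩ B) = (B ∩ T) := Finset.inter_comm T B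
    -- real bound: |T \ B| ≥ (1 - (j/2) ε) m
    have ht' : ((j+1) / 2 : ℕ) = if Even (j+1) then (j/2 : ℕ) + 1 else (j/2 : ℕ) := by
      rcases Nat.even_or_odd j with he | ho
      · obtain ⟨k, hk⟩ := id he
        have : ¬ Even (j+1) := by simp [Nat.even_add_one, he]
        rw [if_neg this]; omega
      · obtain ⟨k, hk⟩ := id ho
        have : Even (j+1) := Odd.add_one ho
        rw [if_pos this]; omega
    have hkey : (1 - (j / 2 : ℕ) * ε) * m ≤ ((T \ B).card : ℝ) := by
      have h1 : ((B ∩ T).card : ℝ) ≤ m - ((B ∩ T').card : ℝ) := by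
        have := hunion
        have : ((B ∩ T).card : ℝ) + ((B ∩ T').card : ℝ) ≤ (m : ℝ) := by
          exact_mod_cast Nat.cast_le.mpr this
        linarith
      have h2 : ((T \ B).card : ℝ) = (T.card : ℝ) - ((B ∩ T).card : ℝ) := by
        rw [← hTB]
        have := hsd
        have : ((T \ B).card : ℝ) + ((T ∩ B).card : ℝ) = (T.card : ℝ) := by exact_mod_cast this
        linarith
      rcases Nat.even_or_odd j with he | ho
      · have hTc : (T.card : ℝ) = m := by exact_mod_cast hTeven he
        have hne : ¬ Even (j+1) := by simp [Nat.even_add_one, he]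
        have ht'' : ((j+1) / 2 : ℕ) = (j/2 : ℕ) := by rw [ht', if_neg hne]
        rw [ht''] at hBT'
        rw [h2, hTc]
        nlinarith [hBT', h1]
      · have hTc : (T.card : ℝ) = m + ε * m := by
          have := hTodd ho
          push_cast [this, hem]
          ring
        have hev : Even (j+1) := Odd.add_one ho
        have ht'' : ((j+1) / 2 : ℕ) = (j/2 : ℕ) + 1 := by rw [ht', if_pos hev]
        rw [ht''] at hBT'
        push_cast at hBT'
        rw [h2, hTc]
        nlinarith [hBT', h1]
    have hssubset : T \ B ⊆ L j \ B := Finset.sdiff_subset_sdiff hT (Finset.Subset.refl B)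
    -- choose A : m-subset of L j \ B containing enough of T \ B
    have hkey' : (1 - (j / 2 : ℕ) * ε) * m ≤ (m : ℝ) := by
      have : (0:ℝ) ≤ ((j/2 : ℕ) : ℝ) * ε * m := by positivity
      nlinarith
    obtain ⟨A, hAsub, hALB, hAcard, hAT⟩ :
        ∃ A, A ⊆ L j \ B ∧ A ⊆ L j ∧ A.card = m ∧ (1 - (j / 2 : ℕ) * ε) * m ≤ ((A ∩ T).card : ℝ) := by
      by_cases hc : m ≤ (T \ B).card
      · obtain ⟨A, hA1, hA2⟩ := Finset.exists_subset_card_eq hc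
        refine ⟨A, hA1.trans hssubset, (hA1.trans hssubset).trans Finset.sdiff_subset, hA2, ?_⟩
        have : A ∩ T = A := Finset.inter_eq_left.mpr ((hA1.trans Finset.sdiff_subset))
        rw [this, hA2]; exact hkey'
      · -- T \ B has fewer than m elements; j ≥ 1
        push_neg at hc
        have hj1' : 1 ≤ j := by
          by_contra h
          have hj0 : j = 0 := by omega
          subst hj0
          simp only [Nat.zero_div, Nat.cast_zero, zero_mul, sub_zero, one_mul] at hkey
          have : (m : ℝ) ≤ ((T \ B).card : ℝ) := hkey
          have : m ≤ (T \ B).card := by exact_mod_cast this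
          omega
        have hLjc : (L j).card = 2 * m + em := hL j hj1' hj
        have hLB : m ≤ (L j \ B).card := by
          have h1 : (L j).card - B.card ≤ (L j \ B).card := Finset.le_card_sdiff B _
          omega
        obtain ⟨A, hA1, hA2, hA3⟩ :=
          Finset.exists_subsuperset_card_eq hssubset (le_of_lt hc) hLB
        refine ⟨A, hA2, hA2.trans Finset.sdiff_subset, hA3, ?_⟩
        have hsubA : T \ B ⊆ A ∩ T := by
          intro x hx
          exact Finset.mem_inter.mpr ⟨hA1 hx, (Finset.mem_sdiff.mp hx).1⟩
        calc (1 - (j / 2 : ℕ) * ε) * m ≤ ((T \ B).card : ℝ) := hkey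
          _ ≤ ((A ∩ T).card : ℝ) := by exact_mod_cast Finset.card_le_card hsubA
    obtain ⟨φ', hφ', hφ'j⟩ := hTcol A hALB hAcard hAT
    refine ⟨fun i => if i = j + 1 then B else φ' i, ⟨?_, ?_⟩, by simp⟩
    · intro i hi
      by_cases h : i = j + 1
      · subst h; simp [hB, hBcard]
      · have hij : i ≤ j := by omega
        simpa [h] using hφ'.1 i hij
    · intro i hi
      by_cases h : i = j
      · subst h
        have hd : Disjoint (φ' i) B := by
          rw [hφ'j]
          exact Finset.disjoint_left.mpr (fun x hx => (Finset.mem_sdiff.mp (hAsub hx)).2)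
        simpa [Nat.lt_irrefl] using hd
      · have h1 : i ≠ j + 1 := by omega
        have h2 : i + 1 ≠ j + 1 := by omega
        have h3 : i < j := by omega
        simpa [h1, h2, h] using hφ'.2 i h3
end

section
/- Let (G; x, y) be a two-terminal series-parallel graph of girth k (i.e., G contains a cycle and the shortest cycle has length k), and let l = ⌈k/2⌉. Then either G itself is a path, or G contains a path P = (v_0, v_1, ..., v_l) of length l such that all internal vertices v_1, ..., v_{l-1} have degree 2 in G and none of them equals x or y. -/
open SimpleGraph

/-- A two-terminal graph: a simple graph together with two terminal vertices. -/
structure TTGraph where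
  V : Type
  G : SimpleGraph V
  x : V
  y : V

/-- Vertex type of the parallel composition. -/
def TTGraph.pV (A B : TTGraph) : Type := A.V ⊕ {v : B.V // v ≠ B.x ∧ v ≠ B.y}

open Classical in
/-- The canonical map from the second graph into the parallel composition. -/
noncomputable def TTGraph.pmap (A B : TTGraph) (v : B.V) : A.pV B :=
  if h1 : v = B.x then Sum.inl A.x
  else if h2 : v = B.y then Sum.inl A.y
  else Sum.inr ⟨v, h1, h2⟩

/-- Parallel composition of two-terminal graphs: identify the two `x`'s and the two `y`'s. -/
noncomputable def TTGraph.parallel (A B : TTGraph) : TTGraph where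
  V := A.pV B
  G := SimpleGraph.fromRel (fun u w =>
    (∃ a b, A.G.Adj a b ∧ u = Sum.inl a ∧ w = Sum.inl b) ∨
    (∃ a b, B.G.Adj a b ∧ u = A.pmap B a ∧ w = A.pmap B b))
  x := Sum.inl A.x
  y := Sum.inl A.y

/-- Vertex type of the series composition. -/
def TTGraph.sV (A B : TTGraph) : Type := A.V ⊕ {v : B.V // v ≠ B.x}

open Classical in
/-- The canonical map from the second graph into the series composition. -/
noncomputable def TTGraph.smap (A B : TTGraph) (v : B.V) : A.sV B :=
  if h1 : v = B.x then Sum.inl A.y else Sum.inr ⟨v, h1⟩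

/-- Series composition of two-terminal graphs: identify `y` of the first with `x` of the second. -/
noncomputable def TTGraph.series (A B : TTGraph) : TTGraph where
  V := A.sV B
  G := SimpleGraph.fromRel (fun u w =>
    (∃ a b, A.G.Adj a b ∧ u = Sum.inl a ∧ w = Sum.inl b) ∨
    (∃ a b, B.G.Adj a b ∧ u = A.smap B a ∧ w = A.smap B b))
  x := Sum.inl A.x
  y := A.smap B B.y

/-- Isomorphism of two-terminal graphs (preserving terminals). -/
def TTGraph.Equiv (A B : TTGraph) : Prop :=
  ∃ e : A.G ≃g B.G, e A.x = B.x ∧ e A.y = B.y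

/-- `K₂` with its two vertices as terminals. -/
def K2TT : TTGraph := ⟨Bool, ⊤, false, true⟩

/-- Two-terminal series-parallel graphs, built recursively from `K₂` by
series and parallel compositions (up to terminal-preserving isomorphism). -/
inductive IsSP : TTGraph → Prop
  | k2 (A : TTGraph) : A.Equiv K2TT → IsSP A
  | parallel (A B C : TTGraph) : IsSP A → IsSP B → C.Equiv (A.parallel B) → IsSP C
  | series (A B C : TTGraph) : IsSP A → IsSP B → C.Equiv (A.series B) → IsSP C

/-- A graph is series-parallel if it is a two-terminal series-parallel graph
for some choice of terminals. -/
def SeriesParallel {V : Type} (G : SimpleGraph V) : Prop :=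
  ∃ x y : V, IsSP ⟨V, G, x, y⟩

/-- `G` is `(a, m)`-choosable: every list assignment with lists of size `a`
admits an `m`-fold colouring from the lists with adjacent vertices getting
disjoint colour sets. -/
def Choosable {V : Type} (G : SimpleGraph V) (a m : ℕ) : Prop :=
  ∀ L : V → Finset ℕ, (∀ v, (L v).card = a) →
    ∃ φ : V → Finset ℕ, (∀ v, φ v ⊆ L v) ∧ (∀ v, (φ v).card = m) ∧
      ∀ u w, G.Adj u w → Disjoint (φ u) (φ w)

/-- `G` is a path graph: it has a Hamiltonian path using all of its edges. -/
def IsPathGraph {V : Type} (G : SimpleGraph V) : Prop :=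
  ∃ (u w : V) (p : G.Walk u w), p.IsPath ∧ (∀ v, v ∈ p.support) ∧
    ∀ e ∈ G.edgeSet, e ∈ p.edges

/-- `G` is a cycle graph: it has a Hamiltonian cycle using all of its edges. -/
def IsCycleGraph {V : Type} (G : SimpleGraph V) : Prop :=
  ∃ (u : V) (p : G.Walk u u), p.IsCycle ∧ (∀ v, v ∈ p.support) ∧
    ∀ e ∈ G.edgeSet, e ∈ p.edges

attribute [reducible] TTGraph.pV TTGraph.sV TTGraph.parallel TTGraph.series K2TT

namespace SPAux
variable {V : Type*} {G : SimpleGraph V} {u v : V}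

lemma getVert_map {W : Type*} {H : SimpleGraph W} (f : G →g H) (p : G.Walk u v) (i : ℕ) :
    (p.map f).getVert i = f (p.getVert i) := by
  induction p generalizing i with
  | nil => simp [Walk.getVert]
  | cons h q ih =>
    cases i with
    | zero => simp
    | succ n => simpa using ih n

lemma getVert_injOn {p : G.Walk u v} (hp : p.IsPath) :
    ∀ i, i ≤ p.length → ∀ j, j ≤ p.length → p.getVert i = p.getVert j → i = j := by
  induction p with
  | nil => intro i hi j hj _; simp only [Walk.length_nil, Nat.le_zero] at hi hj; omega
  | @cons a b c h q ih =>
    rw [Walk.cons_isPath_iff] at hp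
    intro i hi j hj hij
    match i, j with
    | 0, 0 => rfl
    | 0, j + 1 =>
      exfalso
      apply hp.2
      rw [Walk.mem_support_iff_exists_getVert]
      exact ⟨j, by simpa using hij.symm, by simpa using hj⟩
    | i + 1, 0 =>
      exfalso
      apply hp.2
      rw [Walk.mem_support_iff_exists_getVert]
      exact ⟨i, by simpa using hij, by simpa using hi⟩
    | i + 1, j + 1 =>
      have := ih hp.1 i (by simpa using hi) j (by simpa using hj) (by simpa using hij)
      omega

lemma length_eq_one_of_mem_edges {p : G.Walk u v} (hp : p.IsPath) (he : s(u, v) ∈ p.edges) :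
    p.length = 1 := by
  have hadj : p.toSubgraph.Adj u v := by
    rw [← SimpleGraph.Subgraph.mem_edgeSet, Walk.mem_edges_toSubgraph]
    exact he
  obtain ⟨i, hi, hil⟩ := (Walk.toSubgraph_adj_iff _).mp hadj
  rw [Sym2.eq_iff] at hi
  rcases hi with ⟨h1, h2⟩ | ⟨h1, h2⟩
  · have hi0 : i = 0 := getVert_injOn hp i hil.le 0 (Nat.zero_le _)
      (by rw [h1, Walk.getVert_zero])
    subst hi0
    have := getVert_injOn hp 1 (by omega) p.length le_rfl
      (by rw [h2, Walk.getVert_length])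
    omega
  · have := getVert_injOn hp i hil.le p.length le_rfl
      (by rw [h1, Walk.getVert_length])
    omega

lemma internal_neighborSet {p : G.Walk u v} (hp : p.IsPath) {i : ℕ} (h0 : 0 < i)
    (hl : i < p.length) :
    p.toSubgraph.neighborSet (p.getVert i) = {p.getVert (i - 1), p.getVert (i + 1)} := by
  ext w
  simp only [SimpleGraph.Subgraph.mem_neighborSet, Set.mem_insert_iff, Set.mem_singleton_iff]
  constructor
  · intro hadj
    obtain ⟨j, hj, hjl⟩ := (Walk.toSubgraph_adj_iff _).mp hadj
    rw [Sym2.eq_iff] at hj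
    rcases hj with ⟨h1, h2⟩ | ⟨h1, h2⟩
    · have : j = i := getVert_injOn hp j hjl.le i hl.le h1
      subst this
      right; exact h2.symm
    · have : j + 1 = i := getVert_injOn hp (j + 1) hjl i hl.le h2
      left
      rw [← this]
      simpa using h1.symm
  · rintro (rfl | rfl)
    · have : p.toSubgraph.Adj (p.getVert (i - 1)) (p.getVert (i - 1 + 1)) :=
        Walk.toSubgraph_adj_getVert p (by omega)
      have h' : i - 1 + 1 = i := by omega
      rw [h'] at this
      exact this.symm
    · exact Walk.toSubgraph_adj_getVert p hl

lemma mem_edges_getVert {p : G.Walk u v} {i : ℕ} (hi : i < p.length) :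
    s(p.getVert i, p.getVert (i + 1)) ∈ p.edges := by
  rw [← Walk.mem_edges_toSubgraph, SimpleGraph.Subgraph.mem_edgeSet]
  exact Walk.toSubgraph_adj_getVert p hi

lemma tail_map {α β : Type*} (f : α → β) (l : List α) :
    (l.map f).tail = l.tail.map f := by cases l <;> simp

lemma egirth_le_cycle {a : V} {w : G.Walk a a} (hw : w.IsCycle) :
    G.egirth ≤ w.length := by
  rw [SimpleGraph.egirth]
  exact iInf_le_of_le a (iInf_le_of_le w (iInf_le_of_le hw le_rfl))

lemma egirth_le_of_hom {W : Type*} {H : SimpleGraph W} (f : G →g H)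
    (hf : Function.Injective f) : H.egirth ≤ G.egirth := by
  by_cases hG : G.IsAcyclic
  · rw [hG.egirth_eq_top]; exact le_top
  · obtain ⟨a, w, hw, hlen⟩ := SimpleGraph.exists_egirth_eq_length.mpr hG
    rw [hlen]
    have : (w.map f).IsCycle := (Walk.map_isCycle_iff_of_injective hf).mpr hw
    have h2 := egirth_le_cycle this
    rwa [Walk.length_map] at h2

lemma egirth_eq_of_iso {W : Type*} {H : SimpleGraph W} (e : G ≃g H) :
    G.egirth = H.egirth := by
  refine le_antisymm ?_ ?_
  · exact egirth_le_of_hom e.symm.toHom e.symm.injective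
  · exact egirth_le_of_hom e.toHom e.injective

end SPAux

namespace TTGraph
open SPAux

variable {A B : TTGraph}

lemma pmap_x : A.pmap B B.x = Sum.inl A.x := dif_pos rfl

lemma pmap_y (hB : B.x ≠ B.y) : A.pmap B B.y = Sum.inl A.y := by
  rw [TTGraph.pmap, dif_neg (fun h => hB h.symm), dif_pos rfl]

lemma pmap_other {v : B.V} (h1 : v ≠ B.x) (h2 : v ≠ B.y) :
    A.pmap B v = Sum.inr ⟨v, h1, h2⟩ := by
  rw [TTGraph.pmap, dif_neg h1, dif_neg h2]

lemma pmap_injective (hA : A.x ≠ A.y) : Function.Injective (A.pmap B) := by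
  intro a b h
  unfold TTGraph.pmap at h
  split_ifs at h
  all_goals first
    | (subst_vars; rfl)
    | (exact absurd (Sum.inl.inj h) hA)
    | (exact absurd (Sum.inl.inj h).symm hA)
    | (exact congrArg Subtype.val (Sum.inr.inj h))
    | simp at h

lemma smap_x : A.smap B B.x = Sum.inl A.y := dif_pos rfl

lemma smap_other {v : B.V} (h : v ≠ B.x) : A.smap B v = Sum.inr ⟨v, h⟩ := dif_neg h

lemma smap_injective : Function.Injective (A.smap B) := by
  intro a b h
  unfold TTGraph.smap at h
  split_ifs at h
  all_goals first
    | (subst_vars; rfl)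
    | (exact congrArg Subtype.val (Sum.inr.inj h))
    | simp at h

lemma parallel_adj {u w : A.pV B} :
    (A.parallel B).G.Adj u w ↔ u ≠ w ∧
      ((∃ a b, A.G.Adj a b ∧ u = Sum.inl a ∧ w = Sum.inl b) ∨
       (∃ a b, B.G.Adj a b ∧ u = A.pmap B a ∧ w = A.pmap B b)) := by
  change (SimpleGraph.fromRel (fun u w =>
      (∃ a b, A.G.Adj a b ∧ u = Sum.inl a ∧ w = Sum.inl b) ∨
      (∃ a b, B.G.Adj a b ∧ u = A.pmap B a ∧ w = A.pmap B b))).Adj u w ↔ _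
  rw [SimpleGraph.fromRel_adj]
  constructor
  · rintro ⟨hne, (h | h) | (h | h)⟩
    · exact ⟨hne, Or.inl h⟩
    · exact ⟨hne, Or.inr h⟩
    · obtain ⟨a, b, hab, h1, h2⟩ := h
      exact ⟨hne, Or.inl ⟨b, a, hab.symm, h2, h1⟩⟩
    · obtain ⟨a, b, hab, h1, h2⟩ := h
      exact ⟨hne, Or.inr ⟨b, a, hab.symm, h2, h1⟩⟩
  · rintro ⟨hne, h⟩
    exact ⟨hne, Or.inl h⟩

lemma series_adj {u w : A.sV B} :
    (A.series B).G.Adj u w ↔ u ≠ w ∧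
      ((∃ a b, A.G.Adj a b ∧ u = Sum.inl a ∧ w = Sum.inl b) ∨
       (∃ a b, B.G.Adj a b ∧ u = A.smap B a ∧ w = A.smap B b)) := by
  change (SimpleGraph.fromRel (fun u w =>
      (∃ a b, A.G.Adj a b ∧ u = Sum.inl a ∧ w = Sum.inl b) ∨
      (∃ a b, B.G.Adj a b ∧ u = A.smap B a ∧ w = A.smap B b))).Adj u w ↔ _
  rw [SimpleGraph.fromRel_adj]
  constructor
  · rintro ⟨hne, (h | h) | (h | h)⟩
    · exact ⟨hne, Or.inl h⟩
    · exact ⟨hne, Or.inr h⟩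
    · obtain ⟨a, b, hab, h1, h2⟩ := h
      exact ⟨hne, Or.inl ⟨b, a, hab.symm, h2, h1⟩⟩
    · obtain ⟨a, b, hab, h1, h2⟩ := h
      exact ⟨hne, Or.inr ⟨b, a, hab.symm, h2, h1⟩⟩
  · rintro ⟨hne, h⟩
    exact ⟨hne, Or.inl h⟩

lemma parallel_adj_inl {a b : A.V} (h : A.G.Adj a b) :
    (A.parallel B).G.Adj (Sum.inl a) (Sum.inl b) :=
  parallel_adj.mpr ⟨fun hc => h.ne (Sum.inl.inj hc), Or.inl ⟨a, b, h, rfl, rfl⟩⟩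

lemma parallel_adj_pmap (hA : A.x ≠ A.y) {a b : B.V} (h : B.G.Adj a b) :
    (A.parallel B).G.Adj (A.pmap B a) (A.pmap B b) :=
  parallel_adj.mpr ⟨fun hc => h.ne (pmap_injective hA hc), Or.inr ⟨a, b, h, rfl, rfl⟩⟩

lemma series_adj_inl {a b : A.V} (h : A.G.Adj a b) :
    (A.series B).G.Adj (Sum.inl a) (Sum.inl b) :=
  series_adj.mpr ⟨fun hc => h.ne (Sum.inl.inj hc), Or.inl ⟨a, b, h, rfl, rfl⟩⟩

lemma series_adj_smap {a b : B.V} (h : B.G.Adj a b) :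
    (A.series B).G.Adj (A.smap B a) (A.smap B b) :=
  series_adj.mpr ⟨fun hc => h.ne (smap_injective hc), Or.inr ⟨a, b, h, rfl, rfl⟩⟩

/-- Hom from `A` into the parallel composition. -/
noncomputable def homPL : A.G →g (A.parallel B).G := ⟨Sum.inl, parallel_adj_inl⟩

/-- Hom from `B` into the parallel composition. -/
noncomputable def homPR (hA : A.x ≠ A.y) : B.G →g (A.parallel B).G :=
  ⟨A.pmap B, parallel_adj_pmap hA⟩

/-- Hom from `A` into the series composition. -/
noncomputable def homSL : A.G →g (A.series B).G := ⟨Sum.inl, series_adj_inl⟩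

/-- Hom from `B` into the series composition. -/
noncomputable def homSR : B.G →g (A.series B).G := ⟨A.smap B, series_adj_smap⟩

attribute [reducible] homPL homPR homSL homSR

lemma parallel_neighborSet_inl (hB : B.x ≠ B.y) {a : A.V} (h1 : a ≠ A.x) (h2 : a ≠ A.y) :
    (A.parallel B).G.neighborSet (Sum.inl a) = Sum.inl '' (A.G.neighborSet a) := by
  ext w
  simp only [SimpleGraph.mem_neighborSet, Set.mem_image]
  constructor
  · intro h
    rw [parallel_adj] at h
    obtain ⟨hne, h⟩ := h
    rcases h with ⟨a', b', hab, hu, hw⟩ | ⟨a', b', hab, hu, hw⟩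
    · obtain rfl : a' = a := by injection hu.symm
      exact ⟨b', hab, hw.symm⟩
    · exfalso
      by_cases hx : a' = B.x
      · subst hx; rw [pmap_x] at hu; exact h1 (by injection hu)
      by_cases hy : a' = B.y
      · subst hy; rw [pmap_y hB] at hu; exact h2 (by injection hu)
      · rw [pmap_other hx hy] at hu; exact (Sum.inl_ne_inr hu).elim
  · rintro ⟨b, hab, rfl⟩
    exact parallel_adj_inl hab

lemma parallel_neighborSet_pmap (hA : A.x ≠ A.y) (hB : B.x ≠ B.y) {b : B.V}
    (h1 : b ≠ B.x) (h2 : b ≠ B.y) :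
    (A.parallel B).G.neighborSet (A.pmap B b) = (A.pmap B) '' (B.G.neighborSet b) := by
  ext w
  simp only [SimpleGraph.mem_neighborSet, Set.mem_image]
  constructor
  · intro h
    rw [parallel_adj] at h
    obtain ⟨hne, h⟩ := h
    rcases h with ⟨a', b', hab, hu, hw⟩ | ⟨a', b', hab, hu, hw⟩
    · exfalso
      rw [pmap_other h1 h2] at hu
      exact (Sum.inl_ne_inr hu.symm).elim
    · obtain rfl : a' = b := pmap_injective hA hu.symm
      exact ⟨b', hab, hw.symm⟩
  · rintro ⟨c, hbc, rfl⟩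
    exact parallel_adj_pmap hA hbc

lemma series_neighborSet_inl {a : A.V} (h2 : a ≠ A.y) :
    (A.series B).G.neighborSet (Sum.inl a) = Sum.inl '' (A.G.neighborSet a) := by
  ext w
  simp only [SimpleGraph.mem_neighborSet, Set.mem_image]
  constructor
  · intro h
    rw [series_adj] at h
    obtain ⟨hne, h⟩ := h
    rcases h with ⟨a', b', hab, hu, hw⟩ | ⟨a', b', hab, hu, hw⟩
    · obtain rfl : a' = a := by injection hu.symm
      exact ⟨b', hab, hw.symm⟩
    · exfalso
      by_cases hx : a' = B.x
      · subst hx; rw [smap_x] at hu; exact h2 (by injection hu)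
      · rw [smap_other hx] at hu; exact (Sum.inl_ne_inr hu).elim
  · rintro ⟨b, hab, rfl⟩
    exact series_adj_inl hab

lemma series_neighborSet_smap {b : B.V} (h1 : b ≠ B.x) :
    (A.series B).G.neighborSet (A.smap B b) = (A.smap B) '' (B.G.neighborSet b) := by
  ext w
  simp only [SimpleGraph.mem_neighborSet, Set.mem_image]
  constructor
  · intro h
    rw [series_adj] at h
    obtain ⟨hne, h⟩ := h
    rcases h with ⟨a', b', hab, hu, hw⟩ | ⟨a', b', hab, hu, hw⟩
    · exfalso
      rw [smap_other h1] at hu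
      exact (Sum.inl_ne_inr hu.symm).elim
    · obtain rfl : a' = b := smap_injective hu.symm
      exact ⟨b', hab, hw.symm⟩
  · rintro ⟨c, hbc, rfl⟩
    exact series_adj_smap hbc


/-- `A` is an `x`–`y` Hamiltonian path using all edges. -/
def XYPath (A : TTGraph) : Prop :=
  ∃ p : A.G.Walk A.x A.y, p.IsPath ∧ (∀ v, v ∈ p.support) ∧ ∀ e ∈ A.G.edgeSet, e ∈ p.edges

/-- `A` has a path of length `l` whose internal vertices have degree `2`
and avoid the terminals. -/
def Good (A : TTGraph) (l : ℕ) : Prop :=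
  ∃ v : Fin (l + 1) → A.V, Function.Injective v ∧
    (∀ i : Fin l, A.G.Adj (v i.castSucc) (v i.succ)) ∧
    ∀ i : Fin (l + 1), 0 < (i : ℕ) → (i : ℕ) < l →
      (A.G.neighborSet (v i)).ncard = 2 ∧ v i ≠ A.x ∧ v i ≠ A.y

/-- Induction invariant. -/
def SPInv (A : TTGraph) : Prop :=
  A.XYPath ∨ ∀ l : ℕ, (2 * l : ℕ∞) ≤ A.G.egirth + 1 → A.Good l

lemma good_of_path {s t : A.V} {p : A.G.Walk s t} (hp : p.IsPath)
    (l : ℕ) (hl : l ≤ p.length)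
    (hint : ∀ i : ℕ, 0 < i → i < l →
      (A.G.neighborSet (p.getVert i)).ncard = 2 ∧ p.getVert i ≠ A.x ∧ p.getVert i ≠ A.y) :
    A.Good l := by
  refine ⟨fun i => p.getVert i, ?_, ?_, ?_⟩
  · intro i j hij
    have := SPAux.getVert_injOn hp i (le_trans (Nat.le_of_lt_succ i.isLt) hl) j
      (le_trans (Nat.le_of_lt_succ j.isLt) hl) hij
    exact Fin.ext this
  · intro i
    have : A.G.Adj (p.getVert i) (p.getVert (i + 1)) :=
      p.adj_getVert_succ (lt_of_lt_of_le i.isLt hl)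
    simpa using this
  · intro i h0 hil
    exact hint i h0 hil

lemma xypath_good {p : A.G.Walk A.x A.y} (hp : p.IsPath)
    (hedges : ∀ e ∈ A.G.edgeSet, e ∈ p.edges) (l : ℕ) (hl : l ≤ p.length) : A.Good l := by
  refine good_of_path hp l hl ?_
  intro i h0 hil
  have hilen : i < p.length := lt_of_lt_of_le hil hl
  have hNeq : A.G.neighborSet (p.getVert i) = p.toSubgraph.neighborSet (p.getVert i) := by
    ext w
    simp only [SimpleGraph.mem_neighborSet, SimpleGraph.Subgraph.mem_neighborSet]
    constructor
    · intro h
      rw [← SimpleGraph.Subgraph.mem_edgeSet, Walk.mem_edges_toSubgraph]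
      exact hedges _ h
    · intro h
      exact h.adj_sub
  refine ⟨?_, ?_, ?_⟩
  · rw [hNeq, SPAux.internal_neighborSet hp h0 hilen]
    refine Set.ncard_pair ?_
    intro hc
    have := SPAux.getVert_injOn hp (i - 1) (by omega) (i + 1) (by omega) hc
    omega
  · intro hc
    have : p.getVert i = p.getVert 0 := by rw [hc, Walk.getVert_zero]
    have := SPAux.getVert_injOn hp i hilen.le 0 (Nat.zero_le _) this
    omega
  · intro hc
    have : p.getVert i = p.getVert p.length := by rw [hc, Walk.getVert_length]
    have := SPAux.getVert_injOn hp i hilen.le p.length le_rfl this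
    omega

lemma Good.of_hom {P : TTGraph} {f : A.V → P.V} (hinj : Function.Injective f)
    (hadj : ∀ a b, A.G.Adj a b → P.G.Adj (f a) (f b))
    (hdeg : ∀ a, a ≠ A.x → a ≠ A.y → P.G.neighborSet (f a) = f '' A.G.neighborSet a)
    (hterm : ∀ a, a ≠ A.x → a ≠ A.y → f a ≠ P.x ∧ f a ≠ P.y)
    {l : ℕ} (h : A.Good l) : P.Good l := by
  obtain ⟨v, hv, hadj', hint⟩ := h
  refine ⟨fun i => f (v i), hinj.comp hv, fun i => hadj _ _ (hadj' i), ?_⟩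
  intro i h0 hil
  obtain ⟨hn, hx, hy⟩ := hint i h0 hil
  refine ⟨?_, (hterm _ hx hy).1, (hterm _ hx hy).2⟩
  rw [hdeg _ hx hy, Set.ncard_image_of_injective _ hinj, hn]

lemma SPInv.of_equiv {C D : TTGraph} (h : C.Equiv D) (hD : D.SPInv) : C.SPInv := by
  obtain ⟨e, hx, hy⟩ := h
  have hxs : e.symm D.x = C.x := by rw [← hx]; exact e.symm_apply_apply _
  have hys : e.symm D.y = C.y := by rw [← hy]; exact e.symm_apply_apply _
  rcases hD with ⟨p, hp, hsup, hedg⟩ | hgood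
  · left
    refine ⟨(p.map e.symm.toHom).copy hxs hys, ?_, ?_, ?_⟩
    · rw [Walk.isPath_copy]
      exact Walk.map_isPath_of_injective e.symm.injective hp
    · intro v
      rw [Walk.support_copy, Walk.support_map]
      refine List.mem_map.mpr ⟨e v, hsup _, e.symm_apply_apply _⟩
    · intro ed hed
      rw [Walk.edges_copy, Walk.edges_map]
      induction ed with
      | _ a b =>
        have : C.G.Adj a b := hed
        have hD : s(e a, e b) ∈ D.G.edgeSet := by
          rw [SimpleGraph.mem_edgeSet]
          exact e.map_adj_iff.mpr this
        refine List.mem_map.mpr ⟨s(e a, e b), hedg _ hD, ?_⟩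
        simp [Sym2.map_pair_eq]
  · right
    intro l hl
    have hg : (2 * l : ℕ∞) ≤ D.G.egirth + 1 := by
      rwa [← SPAux.egirth_eq_of_iso e]
    obtain ⟨v, hv, hadj', hint⟩ := hgood l hg
    refine ⟨fun i => e.symm (v i), e.symm.injective.comp hv, ?_, ?_⟩
    · intro i
      exact e.symm.map_adj_iff.mpr (hadj' i)
    · intro i h0 hil
      obtain ⟨hn, hvx, hvy⟩ := hint i h0 hil
      refine ⟨?_, ?_, ?_⟩
      · rw [← Nat.card_coe_set_eq, ← Nat.card_congr (e.symm.mapNeighborSet (v i)),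
          Nat.card_coe_set_eq, hn]
      · intro hc
        apply hvx
        rw [← hx, ← hc]
        exact (e.apply_symm_apply _).symm
      · intro hc
        apply hvy
        rw [← hy, ← hc]
        exact (e.apply_symm_apply _).symm

lemma inv_K2 : K2TT.SPInv := by
  left
  have hadj : (⊤ : SimpleGraph Bool).Adj false true := by simp
  refine ⟨Walk.cons hadj Walk.nil, ?_, ?_, ?_⟩
  · rw [Walk.isPath_def]
    simp [K2TT]
  · intro v
    cases v <;> simp [K2TT]
  · intro e he
    induction e with
    | _ a b =>
      have hab : a ≠ b := he
      cases a <;> cases b <;> simp_all [K2TT, Sym2.eq_swap]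

lemma sp_x_ne_y {A : TTGraph} (h : _root_.IsSP A) : A.x ≠ A.y := by
  induction h with
  | k2 A hE =>
    obtain ⟨e, hx, hy⟩ := hE
    intro hc
    rw [hc] at hx
    have : K2TT.x = K2TT.y := hx.symm.trans hy
    simpa [K2TT] using this
  | parallel A B C h1 h2 hE ih1 ih2 =>
    obtain ⟨e, hx, hy⟩ := hE
    intro hc
    apply ih1
    have h3 : (A.parallel B).x = (A.parallel B).y := by rw [← hx, ← hy, hc]
    have h4 : (Sum.inl A.x : A.pV B) = Sum.inl A.y := h3
    exact Sum.inl.inj h4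
  | series A B C h1 h2 hE ih1 ih2 =>
    obtain ⟨e, hx, hy⟩ := hE
    intro hc
    have h3 : (A.series B).x = (A.series B).y := by rw [← hx, ← hy, hc]
    have h4 : (Sum.inl A.x : A.sV B) = A.smap B B.y := h3
    by_cases hby : B.y = B.x
    · have h5 : A.smap B B.y = Sum.inl A.y := by rw [hby]; exact smap_x
      rw [h5] at h4
      exact ih1 (Sum.inl.inj h4)
    · rw [smap_other hby] at h4
      exact Sum.inl_ne_inr h4

lemma inv_series {A B : TTGraph} (hA : A.x ≠ A.y) (hB : B.x ≠ B.y)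
    (iA : A.SPInv) (iB : B.SPInv) : (A.series B).SPInv := by
  have hinl_inj : Function.Injective (Sum.inl : A.V → A.sV B) :=
    fun a b h => Sum.inl.inj h
  rcases iA with ⟨pA, hpA, hsupA, hedgA⟩ | gA
  · rcases iB with ⟨pB, hpB, hsupB, hedgB⟩ | gB
    · -- both Hamiltonian paths: the series composition is a Hamiltonian path
      left
      have hp1 : (pA.map (homSL (A := A) (B := B))).IsPath :=
        Walk.map_isPath_of_injective hinl_inj hpA
      have hp2 : ((pB.map (homSR (A := A) (B := B))).copy smap_x rfl).IsPath := by
        rw [Walk.isPath_copy]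
        exact Walk.map_isPath_of_injective smap_injective hpB
      refine ⟨(pA.map homSL).append ((pB.map homSR).copy smap_x rfl), ?_, ?_, ?_⟩
      · rw [Walk.isPath_def, Walk.support_append, List.nodup_append]
        refine ⟨hp1.support_nodup, ?_, ?_⟩
        · exact (List.tail_sublist _).nodup hp2.support_nodup
        · intro w hw1 w' hw2 hww
          subst hww
          rw [Walk.support_map] at hw1
          obtain ⟨a, ha, rfl⟩ := List.mem_map.mp hw1
          rw [Walk.support_copy, Walk.support_map, SPAux.tail_map] at hw2
          obtain ⟨b, hb, hw⟩ := List.mem_map.mp hw2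
          have hbx : b ≠ B.x := by
            intro hc
            have hnd := hpB.support_nodup
            rw [Walk.support_eq_cons] at hnd
            have hb' : B.x ∈ pB.support.tail := hc ▸ hb
            exact (List.nodup_cons.mp hnd).1 hb'
          have hw' : A.smap B b = Sum.inl a := hw
          rw [smap_other hbx] at hw'
          exact Sum.inr_ne_inl hw'
      · intro w
        rw [Walk.mem_support_append_iff]
        cases w with
        | inl a =>
          left
          rw [Walk.support_map]
          exact List.mem_map.mpr ⟨a, hsupA a, rfl⟩
        | inr b =>
          obtain ⟨b, hb⟩ := b
          right
          rw [Walk.support_copy, Walk.support_map]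
          refine List.mem_map.mpr ⟨b, hsupB b, ?_⟩
          exact smap_other hb
      · intro e he
        induction e with
        | _ u w =>
          have hadj : (A.series B).G.Adj u w := he
          rw [series_adj] at hadj
          obtain ⟨hne, hcl⟩ := hadj
          rw [Walk.edges_append]
          rcases hcl with ⟨a, b, hab, rfl, rfl⟩ | ⟨a, b, hab, rfl, rfl⟩
          · refine List.mem_append_left _ ?_
            rw [Walk.edges_map]
            exact List.mem_map.mpr ⟨s(a, b), hedgA _ hab, rfl⟩
          · refine List.mem_append_right _ ?_
            rw [Walk.edges_copy, Walk.edges_map]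
            exact List.mem_map.mpr ⟨s(a, b), hedgB _ hab, rfl⟩
    · right
      intro l hl
      have hg : (2 * l : ℕ∞) ≤ B.G.egirth + 1 :=
        le_trans hl (add_le_add_left (SPAux.egirth_le_of_hom homSR smap_injective) 1)
      refine Good.of_hom smap_injective (fun a b h => series_adj_smap h) ?_ ?_ (gB l hg)
      · intro b h1 _
        exact series_neighborSet_smap h1
      · intro b h1 h2
        constructor
        · intro hc
          rw [smap_other h1] at hc
          exact Sum.inr_ne_inl hc
        · intro hc
          exact h2 (smap_injective hc)
  · right
    intro l hl
    have hg : (2 * l : ℕ∞) ≤ A.G.egirth + 1 :=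
      le_trans hl (add_le_add_left (SPAux.egirth_le_of_hom homSL hinl_inj) 1)
    refine Good.of_hom hinl_inj (fun a b h => series_adj_inl h) ?_ ?_ (gA l hg)
    · intro a _ h2
      exact series_neighborSet_inl h2
    · intro a h1 h2
      refine ⟨fun hc => h1 (Sum.inl.inj hc), ?_⟩
      intro hc
      have hc' : (Sum.inl a : A.sV B) = A.smap B B.y := hc
      by_cases hby : B.y = B.x
      · have h5 : A.smap B B.y = Sum.inl A.y := by rw [hby]; exact smap_x
        rw [h5] at hc'
        exact h2 (Sum.inl.inj hc')
      · rw [smap_other hby] at hc'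
        exact Sum.inl_ne_inr hc'

lemma inv_parallel {A B : TTGraph} (hA : A.x ≠ A.y) (hB : B.x ≠ B.y)
    (iA : A.SPInv) (iB : B.SPInv) : (A.parallel B).SPInv := by
  have hinl_inj : Function.Injective (Sum.inl : A.V → A.pV B) :=
    fun a b h => Sum.inl.inj h
  have hofA : ∀ l, A.Good l → (A.parallel B).Good l := by
    intro l h
    refine Good.of_hom hinl_inj (fun a b h => parallel_adj_inl h) ?_ ?_ h
    · intro a h1 h2
      exact parallel_neighborSet_inl hB h1 h2
    · intro a h1 h2
      exact ⟨fun hc => h1 (Sum.inl.inj hc), fun hc => h2 (Sum.inl.inj hc)⟩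
  have hofB : ∀ l, B.Good l → (A.parallel B).Good l := by
    intro l h
    refine Good.of_hom (pmap_injective hA) (fun a b h => parallel_adj_pmap hA h) ?_ ?_ h
    · intro b h1 h2
      exact parallel_neighborSet_pmap hA hB h1 h2
    · intro b h1 h2
      rw [pmap_other h1 h2]
      exact ⟨fun hc => Sum.inr_ne_inl hc, fun hc => Sum.inr_ne_inl hc⟩
  rcases iA with ⟨pA, hpA, hsupA, hedgA⟩ | gA
  · rcases iB with ⟨pB, hpB, hsupB, hedgB⟩ | gB
    · -- both Hamiltonian paths
      have hlenA : 1 ≤ pA.length := by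
        rcases Nat.eq_zero_or_pos pA.length with h0 | h
        · exact absurd (Walk.eq_of_length_eq_zero h0) hA
        · omega
      have hlenB : 1 ≤ pB.length := by
        rcases Nat.eq_zero_or_pos pB.length with h0 | h
        · exact absurd (Walk.eq_of_length_eq_zero h0) hB
        · omega
      have hp : (pA.map (homPL (A := A) (B := B))).IsPath :=
        Walk.map_isPath_of_injective hinl_inj hpA
      set q : (A.parallel B).G.Walk (Sum.inl A.x) (Sum.inl A.y) :=
        (pB.map (homPR hA)).copy pmap_x (pmap_y hB) with hqdef
      have hq : q.IsPath := by
        rw [hqdef, Walk.isPath_copy]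
        exact Walk.map_isPath_of_injective (pmap_injective hA) hpB
      have hqlen : q.length = pB.length := by
        rw [hqdef, Walk.length_copy, Walk.length_map]
      have hplen : (pA.map (homPL (A := A) (B := B))).length = pA.length := by rw [Walk.length_map]
      have hsupQ : ∀ w ∈ q.support, ∃ b, b ∈ pB.support ∧ w = A.pmap B b := by
        intro w hw
        rw [hqdef, Walk.support_copy, Walk.support_map] at hw
        obtain ⟨b, hb, hw⟩ := List.mem_map.mp hw
        exact ⟨b, hb, hw.symm⟩
      have hkey : ∀ w, w ∈ (pA.map (homPL (A := A) (B := B))).support → w ∈ q.support →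
          w = Sum.inl A.x ∨ w = Sum.inl A.y := by
        intro w h1 h2
        rw [Walk.support_map] at h1
        obtain ⟨a, _, rfl⟩ := List.mem_map.mp h1
        obtain ⟨b, hb, hw⟩ := hsupQ _ h2
        by_cases hbx : b = B.x
        · left; rw [hw, hbx, pmap_x]
        by_cases hby : b = B.y
        · right; rw [hw, hby, pmap_y hB]
        · rw [pmap_other hbx hby] at hw
          exact absurd hw (fun hc => Sum.inl_ne_inr hc)
      by_cases h11 : pA.length = 1 ∧ pB.length = 1
      · -- the composition is again a single edge
        left
        refine ⟨pA.map homPL, hp, ?_, ?_⟩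
        · intro w
          cases w with
          | inl a =>
            rw [Walk.support_map]
            exact List.mem_map.mpr ⟨a, hsupA a, rfl⟩
          | inr b =>
            obtain ⟨b, hb1, hb2⟩ := b
            exfalso
            have hmem := hsupB b
            rw [Walk.mem_support_iff_exists_getVert] at hmem
            obtain ⟨i, hgi, hile⟩ := hmem
            rw [h11.2] at hile
            interval_cases i
            · rw [Walk.getVert_zero] at hgi
              exact hb1 hgi.symm
            · have hgl := pB.getVert_length
              rw [h11.2] at hgl
              exact hb2 (hgi.symm.trans hgl)
        · intro e he
          induction e with
          | _ u w =>
            have hadj : (A.parallel B).G.Adj u w := he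
            rw [parallel_adj] at hadj
            obtain ⟨hne, hcl⟩ := hadj
            rcases hcl with ⟨a, b, hab, rfl, rfl⟩ | ⟨a, b, hab, rfl, rfl⟩
            · rw [Walk.edges_map]
              exact List.mem_map.mpr ⟨s(a, b), hedgA _ hab, rfl⟩
            · have hsab : s(a, b) ∈ pB.edges := hedgB _ hab
              have hmem_a : a ∈ pB.support := pB.fst_mem_support_of_mem_edges hsab
              have hmem_b : b ∈ pB.support := pB.snd_mem_support_of_mem_edges hsab
              have hset : ∀ c, c ∈ pB.support → c = B.x ∨ c = B.y := by
                intro c hc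
                rw [Walk.mem_support_iff_exists_getVert] at hc
                obtain ⟨i, hgi, hile⟩ := hc
                rw [h11.2] at hile
                interval_cases i
                · left; rw [← hgi, Walk.getVert_zero]
                · right
                  have hgl := pB.getVert_length
                  rw [h11.2] at hgl
                  exact hgi.symm.trans hgl
              have hne' : a ≠ b := hab.ne
              have hedge : (s(A.pmap B a, A.pmap B b) : Sym2 (A.parallel B).V) =
                  s(Sum.inl A.x, Sum.inl A.y) := by
                rcases hset a hmem_a with rfl | rfl <;> rcases hset b hmem_b with rfl | rfl
                · exact absurd rfl hne'
                · rw [pmap_x, pmap_y hB]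
                · rw [pmap_x, pmap_y hB]
                  exact Sym2.eq_swap
                · exact absurd rfl hne'
              rw [hedge]
              have h1 : s(pA.getVert 0, pA.getVert 1) ∈ pA.edges :=
                SPAux.mem_edges_getVert (by omega)
              rw [Walk.getVert_zero] at h1
              have h2 : pA.getVert 1 = A.y := by
                have := pA.getVert_length
                rwa [h11.1] at this
              rw [h2] at h1
              rw [Walk.edges_map]
              exact List.mem_map.mpr ⟨s(A.x, A.y), h1, rfl⟩
      · -- there is a cycle of length `pA.length + pB.length`
        right
        intro l hl
        set p : (A.parallel B).G.Walk (Sum.inl A.x) (Sum.inl A.y) := pA.map homPL with hpdef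
        have hcyc : (p.append q.reverse).IsCycle := by
          have hqrev : q.reverse.IsPath := hq.reverse
          have hdisj : ∀ e, e ∈ p.edges → e ∈ q.edges → False := by
            intro e he1 he2
            induction e with
            | _ u w =>
              have hu1 : u ∈ p.support := p.fst_mem_support_of_mem_edges he1
              have hw1 : w ∈ p.support := p.snd_mem_support_of_mem_edges he1
              have hu2 : u ∈ q.support := q.fst_mem_support_of_mem_edges he2
              have hw2 : w ∈ q.support := q.snd_mem_support_of_mem_edges he2
              have hne : u ≠ w := (p.adj_of_mem_edges he1).ne
              have hXY : s(u, w) = s((Sum.inl A.x : A.pV B), Sum.inl A.y) := by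
                rcases hkey u hu1 hu2 with rfl | rfl <;> rcases hkey w hw1 hw2 with rfl | rfl
                · exact absurd rfl hne
                · rfl
                · exact Sym2.eq_swap
                · exact absurd rfl hne
              rw [hXY] at he1 he2
              have hA1 : p.length = 1 := SPAux.length_eq_one_of_mem_edges hp he1
              have hB1 : q.length = 1 := SPAux.length_eq_one_of_mem_edges hq he2
              rw [hpdef, hplen] at hA1
              rw [hqlen] at hB1
              exact h11 ⟨hA1, hB1⟩
          refine ⟨⟨⟨?_⟩, ?_⟩, ?_⟩
          · rw [Walk.edges_append, Walk.edges_reverse]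
            refine List.Nodup.append hp.isTrail.edges_nodup
              (List.nodup_reverse.mpr hq.isTrail.edges_nodup) ?_
            intro e he1 he2
            exact hdisj e he1 (List.mem_reverse.mp he2)
          · intro hc
            have : (p.append q.reverse).length = 0 := by rw [hc]; rfl
            rw [Walk.length_append, Walk.length_reverse, hpdef, hplen, hqlen] at this
            omega
          · have hps : (p.append q.reverse).support.tail =
                p.support.tail ++ q.reverse.support.tail := by
              rw [Walk.support_append]
              conv_lhs => rw [Walk.support_eq_cons p, List.cons_append, List.tail_cons]
            rw [hps]
            refine List.Nodup.append (hp.support_nodup.tail)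
              ((List.tail_sublist _).nodup hqrev.support_nodup) ?_
            intro w hw1 hw2
            have hw1' : w ∈ p.support := List.mem_of_mem_tail hw1
            have hwX : w ≠ Sum.inl A.x := by
              intro hc
              have hnd := hp.support_nodup
              rw [Walk.support_eq_cons] at hnd
              have hw1'' : Sum.inl A.x ∈ p.support.tail := hc ▸ hw1
              exact (List.nodup_cons.mp hnd).1 hw1''
            have hw2' : w ∈ q.support := by
              have := List.mem_of_mem_tail hw2
              rw [Walk.support_reverse, List.mem_reverse] at this
              exact this
            have hwY : w ≠ Sum.inl A.y := by
              intro hc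
              have hnd := hqrev.support_nodup
              rw [Walk.support_eq_cons] at hnd
              have hw2'' : Sum.inl A.y ∈ q.reverse.support.tail := hc ▸ hw2
              exact (List.nodup_cons.mp hnd).1 hw2''
            rcases hkey w hw1' hw2' with hc | hc
            · exact hwX hc
            · exact hwY hc
        have hclen : (p.append q.reverse).length = pA.length + pB.length := by
          rw [Walk.length_append, Walk.length_reverse, hpdef, hplen, hqlen]
        have hgl : (A.parallel B).G.egirth ≤ ((pA.length + pB.length : ℕ) : ℕ∞) := by
          have := SPAux.egirth_le_cycle hcyc
          rwa [hclen] at this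
        have hl' : 2 * l ≤ pA.length + pB.length + 1 := by
          have h2 := le_trans hl (add_le_add_left hgl 1)
          exact_mod_cast h2
        have hcases : l ≤ pA.length ∨ l ≤ pB.length := by omega
        rcases hcases with hlle | hlle
        · exact hofA l (xypath_good hpA hedgA l hlle)
        · exact hofB l (xypath_good hpB hedgB l hlle)
    · right
      intro l hl
      have hg : (2 * l : ℕ∞) ≤ B.G.egirth + 1 :=
        le_trans hl (add_le_add_left
          (SPAux.egirth_le_of_hom (homPR hA) (pmap_injective hA)) 1)
      exact hofB l (gB l hg)
  · right
    intro l hl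
    have hg : (2 * l : ℕ∞) ≤ A.G.egirth + 1 :=
      le_trans hl (add_le_add_left (SPAux.egirth_le_of_hom homPL hinl_inj) 1)
    exact hofA l (gA l hg)

lemma sp_inv {A : TTGraph} (h : _root_.IsSP A) : A.SPInv := by
  induction h with
  | k2 A hE => exact SPInv.of_equiv hE inv_K2
  | parallel A B C h1 h2 hE ih1 ih2 =>
    exact SPInv.of_equiv hE (inv_parallel (sp_x_ne_y h1) (sp_x_ne_y h2) ih1 ih2)
  | series A B C h1 h2 hE ih1 ih2 =>
    exact SPInv.of_equiv hE (inv_series (sp_x_ne_y h1) (sp_x_ne_y h2) ih1 ih2)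


end TTGraph

/-- If `(G; x, y)` is a two-terminal series-parallel graph of girth `k` and
`l = ⌈k/2⌉`, then either `G` is a path, or `G` contains a path
`(v_0, v_1, ..., v_l)` whose internal vertices all have degree `2` in `G` and
are distinct from both terminals. -/
theorem stmt_3 (A : TTGraph) (hSP : IsSP A) (k : ℕ) (hgirth : A.G.egirth = (k : ℕ∞)) :
    IsPathGraph A.G ∨
      ∃ v : Fin ((k + 1) / 2 + 1) → A.V, Function.Injective v ∧
        (∀ i : Fin ((k + 1) / 2), A.G.Adj (v i.castSucc) (v i.succ)) ∧
        ∀ i : Fin ((k + 1) / 2 + 1), 0 < (i : ℕ) → (i : ℕ) < (k + 1) / 2 →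
          (A.G.neighborSet (v i)).ncard = 2 ∧ v i ≠ A.x ∧ v i ≠ A.y := by
  rcases TTGraph.sp_inv hSP with ⟨p, h1, h2, h3⟩ | hg
  · exact Or.inl ⟨A.x, A.y, p, h1, h2, h3⟩
  · right
    have hle : (2 : ℕ∞) * (((k + 1) / 2 : ℕ) : ℕ∞) ≤ A.G.egirth + 1 := by
      rw [hgirth]
      have h : 2 * ((k + 1) / 2) ≤ k + 1 := by omega
      exact_mod_cast h
    obtain ⟨v, h1, h2, h3⟩ := hg ((k + 1) / 2) hle
    exact ⟨v, h1, h2, h3⟩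
end

section
/- Fix positive integers m, q and a positive real ε with εm an integer and ε < 1/q. Set l = 2q. Consider a path P = (v_0, ..., v_{2q}) with list assignment L defined using pairwise disjoint colour sets A_1, A_3, ..., A_{2q-3} (each of size m), B_2, B_4, ..., B_{2q-2} (each of size m), Z_1, Z_3, ..., Z_{2q-1} (each of size εm), and m-sets M_1, M_2 disjoint from all of these and from each other, as follows: L(v_0) = M_1, L(v_1) = M_1 ∪ A_1 ∪ Z_1, L(v_{2j}) = B_{2j} ∪ A_{2j-1} ∪ Z_{2j-1} for 1 ≤ j ≤ q-1, L(v_{2i+1}) = B_{2i} ∪ A_{2i+1} ∪ Z_{2i+1} for 1 ≤ i ≤ q-2, L(v_{2q-1}) = M_2 ∪ B_{2q-2} ∪ Z_{2q-1}, L(v_{2q}) = M_2. Then for any j ∈ {2, 3, ..., q}, if φ is an m-fold L-colouring of the subpath (v_0, ..., v_{2j-2}), then |φ(v_{2j-2}) ∩ B_{2j-2}| ≥ m - (j-1)εm. -/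
/-- The combined family of colour sets `A_r`, `B_s`, `Z_t`, `M₁`, `M₂`,
indexed by `ℕ ⊕ ℕ ⊕ ℕ ⊕ Bool`. -/
def fam (A B Z : ℕ → Finset ℕ) (M₁ M₂ : Finset ℕ) : ℕ ⊕ ℕ ⊕ ℕ ⊕ Bool → Finset ℕ :=
  Sum.elim A (Sum.elim B (Sum.elim Z (fun b => if b then M₁ else M₂)))

/-- The valid indices of the family: odd `r` with `1 ≤ r ≤ aHi` for the `A`'s,
even `s` with `2 ≤ s ≤ sHi` for the `B`'s, odd `t` with `1 ≤ t ≤ tHi` for the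
`Z`'s, and both of `M₁`, `M₂`. -/
def okIdx (aHi sHi tHi : ℕ) : ℕ ⊕ ℕ ⊕ ℕ ⊕ Bool → Prop
  | .inl r => Odd r ∧ 1 ≤ r ∧ r ≤ aHi
  | .inr (.inl s) => Even s ∧ 2 ≤ s ∧ s ≤ sHi
  | .inr (.inr (.inl t)) => Odd t ∧ 1 ≤ t ∧ t ≤ tHi
  | .inr (.inr (.inr _)) => True


lemma split3 (s X Y W : Finset ℕ) (h : s ⊆ X ∪ Y ∪ W) :
    s.card ≤ (s ∩ X).card + (s ∩ Y).card + (s ∩ W).card := by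
  have hs : s = (s ∩ X) ∪ (s ∩ Y) ∪ (s ∩ W) := by
    rw [← Finset.inter_union_distrib_left, ← Finset.inter_union_distrib_left,
      Finset.inter_eq_left.mpr h]
  calc s.card = ((s ∩ X) ∪ (s ∩ Y) ∪ (s ∩ W)).card := by rw [← hs]
    _ ≤ ((s ∩ X) ∪ (s ∩ Y)).card + (s ∩ W).card := Finset.card_union_le _ _
    _ ≤ (s ∩ X).card + (s ∩ Y).card + (s ∩ W).card := by
        have := Finset.card_union_le (s ∩ X) (s ∩ Y); omega

lemma pairle (s t X : Finset ℕ) (h : Disjoint s t) :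
    (s ∩ X).card + (t ∩ X).card ≤ X.card := by
  rw [← Finset.card_union_of_disjoint
    (h.mono Finset.inter_subset_left Finset.inter_subset_left)]
  exact Finset.card_le_card
    (Finset.union_subset Finset.inter_subset_right Finset.inter_subset_right)

/-- Claim 1 of Lemma 2, even case `l = 2q`: with the list assignment `L` built
from pairwise disjoint sets `A_r` (`r = 1, 3, ..., 2q-3`, size `m`),
`B_s` (`s = 2, ..., 2q-2`, size `m`), `Z_t` (`t = 1, 3, ..., 2q-1`, size `εm`)
and `m`-sets `M₁, M₂`, any `m`-fold `L`-colouring `φ` of `(v_0, ..., v_{2j-2})`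
(for `2 ≤ j ≤ q`) satisfies `|φ(v_{2j-2}) ∩ B_{2j-2}| ≥ m - (j-1)εm`. -/
theorem stmt_6 (q m em : ℕ) (hq : 0 < q) (hm : 0 < m) (ε : ℝ) (hε : 0 < ε)
    (hem : (em : ℝ) = ε * m) (hεq : ε < 1 / q)
    (A B Z : ℕ → Finset ℕ) (M₁ M₂ : Finset ℕ)
    (hM1 : M₁.card = m) (hM2 : M₂.card = m)
    (hA : ∀ r, Odd r → r ≤ 2 * q - 3 → (A r).card = m)
    (hB : ∀ s, Even s → 2 ≤ s → s ≤ 2 * q - 2 → (B s).card = m)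
    (hZ : ∀ t, Odd t → t ≤ 2 * q - 1 → (Z t).card = em)
    (hdisj : ∀ i j, okIdx (2 * q - 3) (2 * q - 2) (2 * q - 1) i →
      okIdx (2 * q - 3) (2 * q - 2) (2 * q - 1) j → i ≠ j →
      Disjoint (fam A B Z M₁ M₂ i) (fam A B Z M₁ M₂ j))
    (L : ℕ → Finset ℕ)
    (hL0 : L 0 = M₁)
    (hL1 : L 1 = M₁ ∪ A 1 ∪ Z 1)
    (hLeven : ∀ j, 1 ≤ j → j ≤ q - 1 →
      L (2 * j) = B (2 * j) ∪ A (2 * j - 1) ∪ Z (2 * j - 1))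
    (hLodd : ∀ i, 1 ≤ i → i ≤ q - 2 →
      L (2 * i + 1) = B (2 * i) ∪ A (2 * i + 1) ∪ Z (2 * i + 1))
    (hLpen : L (2 * q - 1) = M₂ ∪ B (2 * q - 2) ∪ Z (2 * q - 1))
    (hLlast : L (2 * q) = M₂) :
    ∀ j, 2 ≤ j → j ≤ q → ∀ φ : ℕ → Finset ℕ, PathCol (2 * j - 2) m L φ →
      (m : ℝ) - ((j : ℝ) - 1) * ε * m ≤ ((φ (2 * j - 2) ∩ B (2 * j - 2)).card : ℝ) := by
  -- natural-number version, by induction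
  have key : ∀ k, k + 2 ≤ q → ∀ φ : ℕ → Finset ℕ, PathCol (2 * k + 2) m L φ →
      m ≤ (φ (2 * k + 2) ∩ B (2 * k + 2)).card + (k + 1) * em := by
    intro k
    induction k with
    | zero =>
      intro hkq φ hcol
      show m ≤ (φ 2 ∩ B 2).card + (0 + 1) * em
      have h0 := hcol.1 0 (by omega)
      have h1 := hcol.1 1 (by omega)
      have h2 := hcol.1 2 (by omega)
      have hd01 := hcol.2 0 (by omega)
      have hd12 := hcol.2 1 (by omega)
      have hL2 : L 2 = B 2 ∪ A 1 ∪ Z 1 := by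
        have := hLeven 1 le_rfl (by omega); simpa using this
      rw [hL0] at h0
      rw [hL1] at h1
      rw [hL2] at h2
      -- φ 0 = M₁
      have hφ0 : φ 0 = M₁ :=
        Finset.eq_of_subset_of_card_le h0.1 (by omega)
      have hM0 : (φ 1 ∩ M₁).card = 0 := by
        rw [Finset.card_eq_zero, ← hφ0, Finset.inter_comm]
        exact Finset.disjoint_iff_inter_eq_empty.mp hd01
      have s1 := split3 (φ 1) M₁ (A 1) (Z 1) h1.1
      have s2 := split3 (φ 2) (B 2) (A 1) (Z 1) h2.1
      have pA := pairle (φ 1) (φ 2) (A 1) hd12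
      have pZ := pairle (φ 1) (φ 2) (Z 1) hd12
      have hcA : (A 1).card = m := hA 1 (by decide) (by omega)
      have hcZ : (Z 1).card = em := hZ 1 (by decide) (by omega)
      rw [h1.2] at s1
      rw [h2.2] at s2
      rw [hcA] at pA
      rw [hcZ] at pZ
      omega
    | succ k ih =>
      intro hkq φ hcol
      have hrest : PathCol (2 * k + 2) m L φ :=
        ⟨fun i hi => hcol.1 i (by omega), fun i hi => hcol.2 i (by omega)⟩
      have IH := ih (by omega) φ hrest
      have hv := hcol.1 (2 * k + 2) (by omega)
      have hw := hcol.1 (2 * k + 3) (by omega)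
      have hx := hcol.1 (2 * k + 4) (by omega)
      have hdvw : Disjoint (φ (2 * k + 2)) (φ (2 * k + 3)) := by
        have := hcol.2 (2 * k + 2) (by omega); simpa using this
      have hdwx : Disjoint (φ (2 * k + 3)) (φ (2 * k + 4)) := by
        have := hcol.2 (2 * k + 3) (by omega); simpa using this
      have hLw : L (2 * k + 3) = B (2 * k + 2) ∪ A (2 * k + 3) ∪ Z (2 * k + 3) := by
        have := hLodd (k + 1) (by omega) (by omega)
        have e1 : 2 * (k + 1) = 2 * k + 2 := by ring
        rw [e1] at this; simpa using this
      have hLx : L (2 * k + 4) = B (2 * k + 4) ∪ A (2 * k + 3) ∪ Z (2 * k + 3) := by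
        have := hLeven (k + 2) (by omega) (by omega)
        have e1 : 2 * (k + 2) = 2 * k + 4 := by ring
        rw [e1] at this
        have e2 : 2 * k + 4 - 1 = 2 * k + 3 := by omega
        rw [e2] at this; exact this
      rw [hLw] at hw
      rw [hLx] at hx
      have hcBv : (B (2 * k + 2)).card = m :=
        hB _ (by exact ⟨k + 1, by ring⟩) (by omega) (by omega)
      have hcA : (A (2 * k + 3)).card = m :=
        hA _ ⟨k + 1, by ring⟩ (by omega)
      have hcZ : (Z (2 * k + 3)).card = em :=
        hZ _ ⟨k + 1, by ring⟩ (by omega)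
      have pB := pairle (φ (2 * k + 2)) (φ (2 * k + 3)) (B (2 * k + 2)) hdvw
      have pA := pairle (φ (2 * k + 3)) (φ (2 * k + 4)) (A (2 * k + 3)) hdwx
      have pZ := pairle (φ (2 * k + 3)) (φ (2 * k + 4)) (Z (2 * k + 3)) hdwx
      have sw := split3 (φ (2 * k + 3)) (B (2 * k + 2)) (A (2 * k + 3)) (Z (2 * k + 3)) hw.1
      have sx := split3 (φ (2 * k + 4)) (B (2 * k + 4)) (A (2 * k + 3)) (Z (2 * k + 3)) hx.1
      rw [hw.2] at sw
      rw [hx.2] at sx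
      rw [hcBv] at pB
      rw [hcA] at pA
      rw [hcZ] at pZ
      have e3 : 2 * (k + 1) + 2 = 2 * k + 4 := by ring
      rw [e3]
      have e4 : (k + 1 + 1) * em = (k + 1) * em + em := by ring
      rw [e4]
      generalize (k + 1) * em = E at IH ⊢
      omega
  intro j hj2 hjq φ hcol
  obtain ⟨k, rfl⟩ : ∃ k, j = k + 2 := ⟨j - 2, by omega⟩
  have e1 : 2 * (k + 2) - 2 = 2 * k + 2 := by omega
  rw [e1] at hcol ⊢
  have hnat := key k (by omega) φ hcol
  have hcast : (m : ℝ) ≤ ((φ (2 * k + 2) ∩ B (2 * k + 2)).card : ℝ) + ((k + 1) * em : ℕ) := by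
    exact_mod_cast hnat
  push_cast at hcast
  rw [hem] at hcast
  push_cast
  nlinarith [hcast]
end

section
/- Let q, m be positive integers with q ≥ 2, ε > 0 with εm an integer and ε < 1/q. In the list assignment L of Lemma 2 for the even case l = 2q (with M_1, M_2, disjoint sets A_r, B_s, Z_t as specified), there is no m-fold L-colouring of the path P_{2q} = (v_0, ..., v_{2q}): any purported colouring φ would require φ(v_{2q-1}) ⊆ (B_{2q-2} \ φ(v_{2q-2})) ∪ Z_{2q-1}, a set of size at most qεm < m, contradiction. -/
/-- Split the cardinality of a set contained in a disjoint union. -/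
private lemma split_card_aux (s t u : Finset ℕ) (h : s ⊆ t ∪ u) (hd : Disjoint t u) :
    (s ∩ t).card + (s ∩ u).card = s.card := by
  rw [← Finset.card_union_of_disjoint
      (hd.mono Finset.inter_subset_right Finset.inter_subset_right),
    ← Finset.inter_union_distrib_left, Finset.inter_eq_left.mpr h]

/-- Lemma 2, even case `l = 2q` (`q ≥ 2`, `0 < ε < 1/q`, `εm ∈ ℤ`): the list
assignment `L` built from pairwise disjoint sets `A_r`, `B_s`, `Z_t`, `M₁`, `M₂`
as specified admits no `m`-fold `L`-colouring of the path `(v_0, ..., v_{2q})`. -/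
theorem stmt_14 (q m em : ℕ) (hq : 2 ≤ q) (hm : 0 < m) (ε : ℝ) (hε : 0 < ε)
    (hem : (em : ℝ) = ε * m) (hεq : ε < 1 / q)
    (A B Z : ℕ → Finset ℕ) (M₁ M₂ : Finset ℕ)
    (hM1 : M₁.card = m) (hM2 : M₂.card = m)
    (hA : ∀ r, Odd r → r ≤ 2 * q - 3 → (A r).card = m)
    (hB : ∀ s, Even s → 2 ≤ s → s ≤ 2 * q - 2 → (B s).card = m)
    (hZ : ∀ t, Odd t → t ≤ 2 * q - 1 → (Z t).card = em)
    (hdisj : ∀ i j, okIdx (2 * q - 3) (2 * q - 2) (2 * q - 1) i →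
      okIdx (2 * q - 3) (2 * q - 2) (2 * q - 1) j → i ≠ j →
      Disjoint (fam A B Z M₁ M₂ i) (fam A B Z M₁ M₂ j))
    (L : ℕ → Finset ℕ)
    (hL0 : L 0 = M₁)
    (hL1 : L 1 = M₁ ∪ A 1 ∪ Z 1)
    (hLeven : ∀ j, 1 ≤ j → j ≤ q - 1 →
      L (2 * j) = B (2 * j) ∪ A (2 * j - 1) ∪ Z (2 * j - 1))
    (hLodd : ∀ i, 1 ≤ i → i ≤ q - 2 →
      L (2 * i + 1) = B (2 * i) ∪ A (2 * i + 1) ∪ Z (2 * i + 1))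
    (hLpen : L (2 * q - 1) = M₂ ∪ B (2 * q - 2) ∪ Z (2 * q - 1))
    (hLlast : L (2 * q) = M₂) :
    ¬ ∃ φ : ℕ → Finset ℕ, PathCol (2 * q) m L φ := by
  rintro ⟨φ, hsub, hdis⟩
  -- disjointness helpers
  have dBA : ∀ s r, Even s → 2 ≤ s → s ≤ 2*q-2 → Odd r → r ≤ 2*q-3 →
      Disjoint (B s) (A r) := by
    intro s r h1 h2 h3 h4 h5
    simpa [fam] using hdisj (Sum.inr (Sum.inl s)) (Sum.inl r) ⟨h1, h2, h3⟩
      ⟨h4, h4.pos, h5⟩ (by simp)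
  have dBZ : ∀ s t, Even s → 2 ≤ s → s ≤ 2*q-2 → Odd t → t ≤ 2*q-1 →
      Disjoint (B s) (Z t) := by
    intro s t h1 h2 h3 h4 h5
    simpa [fam] using hdisj (Sum.inr (Sum.inl s)) (Sum.inr (Sum.inr (Sum.inl t)))
      ⟨h1, h2, h3⟩ ⟨h4, h4.pos, h5⟩ (by simp)
  have dAZ : ∀ r t, Odd r → r ≤ 2*q-3 → Odd t → t ≤ 2*q-1 →
      Disjoint (A r) (Z t) := by
    intro r t h1 h2 h3 h4
    simpa [fam] using hdisj (Sum.inl r) (Sum.inr (Sum.inr (Sum.inl t)))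
      ⟨h1, h1.pos, h2⟩ ⟨h3, h3.pos, h4⟩ (by simp)
  have dM2B : ∀ s, Even s → 2 ≤ s → s ≤ 2*q-2 → Disjoint M₂ (B s) := by
    intro s h1 h2 h3
    simpa [fam] using hdisj (Sum.inr (Sum.inr (Sum.inr false))) (Sum.inr (Sum.inl s))
      trivial ⟨h1, h2, h3⟩ (by simp)
  have dM2Z : ∀ t, Odd t → t ≤ 2*q-1 → Disjoint M₂ (Z t) := by
    intro t h1 h2
    simpa [fam] using hdisj (Sum.inr (Sum.inr (Sum.inr false)))
      (Sum.inr (Sum.inr (Sum.inl t))) trivial ⟨h1, h1.pos, h2⟩ (by simp)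
  -- φ 0 = M₁ and φ (2q) = M₂
  have h0 : φ 0 = M₁ := by
    refine Finset.eq_of_subset_of_card_le (hL0 ▸ (hsub 0 (by omega)).1) ?_
    rw [hM1, (hsub 0 (by omega)).2]
  have hlast : φ (2*q) = M₂ := by
    refine Finset.eq_of_subset_of_card_le (hLlast ▸ (hsub (2*q) le_rfl).1) ?_
    rw [hM2, (hsub (2*q) le_rfl).2]
  -- the step from an odd vertex to the next even vertex
  have Bstep : ∀ i, i + 1 ≤ q - 1 →
      m ≤ (φ (2*i+1) ∩ (A (2*i+1) ∪ Z (2*i+1))).card + i * em →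
      m ≤ (φ (2*(i+1)) ∩ B (2*(i+1))).card + (i+1) * em := by
    intro i hi hE
    have hOddA : Odd (2*i+1) := by rw [Nat.odd_iff]; omega
    have hLv : L (2*(i+1)) = B (2*(i+1)) ∪ A (2*i+1) ∪ Z (2*i+1) := by
      have h := hLeven (i+1) (by omega) (by omega)
      rwa [show 2*(i+1)-1 = 2*i+1 from by omega] at h
    obtain ⟨hsv, hcv⟩ := hsub (2*(i+1)) (by omega)
    rw [hLv, Finset.union_assoc] at hsv
    have dAZ' : Disjoint (A (2*i+1)) (Z (2*i+1)) :=
      dAZ _ _ hOddA (by omega) hOddA (by omega)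
    have dB_AZ : Disjoint (B (2*(i+1))) (A (2*i+1) ∪ Z (2*i+1)) :=
      Finset.disjoint_union_right.mpr
        ⟨dBA _ _ (by rw [Nat.even_iff]; omega) (by omega) (by omega) hOddA (by omega),
         dBZ _ _ (by rw [Nat.even_iff]; omega) (by omega) (by omega) hOddA (by omega)⟩
    have hsplit := split_card_aux _ _ _ hsv dB_AZ
    rw [hcv] at hsplit
    have hdprev : Disjoint (φ (2*i+1)) (φ (2*(i+1))) := by
      have h := hdis (2*i+1) (by omega)
      rwa [show 2*i+1+1 = 2*(i+1) from by omega] at h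
    have hsubAZ : φ (2*(i+1)) ∩ (A (2*i+1) ∪ Z (2*i+1)) ⊆
        (A (2*i+1) ∪ Z (2*i+1)) \ φ (2*i+1) := by
      intro x hx
      rw [Finset.mem_inter] at hx
      rw [Finset.mem_sdiff]
      exact ⟨hx.2, fun hxp => Finset.disjoint_left.mp hdprev hxp hx.1⟩
    have hle := Finset.card_le_card hsubAZ
    have hsd : ((A (2*i+1) ∪ Z (2*i+1)) ∩ φ (2*i+1)).card +
        ((A (2*i+1) ∪ Z (2*i+1)) \ φ (2*i+1)).card = m + em := by
      rw [Finset.card_inter_add_card_sdiff, Finset.card_union_of_disjoint dAZ',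
        hA _ hOddA (by omega), hZ _ hOddA (by omega)]
    rw [Finset.inter_comm] at hE
    have hmul : (i+1)*em = i*em + em := by ring
    omega
  -- the step from an even vertex to the next odd vertex
  have Estep : ∀ i, 1 ≤ i → i ≤ q-2 →
      m ≤ (φ (2*i) ∩ B (2*i)).card + i * em →
      m ≤ (φ (2*i+1) ∩ (A (2*i+1) ∪ Z (2*i+1))).card + i * em := by
    intro i h1 h2 hBc
    have hOddA : Odd (2*i+1) := by rw [Nat.odd_iff]; omega
    have hEvB : Even (2*i) := by rw [Nat.even_iff]; omega
    obtain ⟨hsv, hcv⟩ := hsub (2*i+1) (by omega)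
    rw [hLodd i h1 h2, Finset.union_assoc] at hsv
    have dB_AZ : Disjoint (B (2*i)) (A (2*i+1) ∪ Z (2*i+1)) :=
      Finset.disjoint_union_right.mpr
        ⟨dBA _ _ hEvB (by omega) (by omega) hOddA (by omega),
         dBZ _ _ hEvB (by omega) (by omega) hOddA (by omega)⟩
    have hsplit := split_card_aux _ _ _ hsv dB_AZ
    rw [hcv] at hsplit
    have hdprev : Disjoint (φ (2*i)) (φ (2*i+1)) := hdis (2*i) (by omega)
    have hsubB : φ (2*i+1) ∩ B (2*i) ⊆ B (2*i) \ φ (2*i) := by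
      intro x hx
      rw [Finset.mem_inter] at hx
      rw [Finset.mem_sdiff]
      exact ⟨hx.2, fun hxp => Finset.disjoint_left.mp hdprev hxp hx.1⟩
    have hle := Finset.card_le_card hsubB
    have hsd : (B (2*i) ∩ φ (2*i)).card + (B (2*i) \ φ (2*i)).card = m := by
      rw [Finset.card_inter_add_card_sdiff, hB _ hEvB (by omega) (by omega)]
    rw [Finset.inter_comm] at hBc
    omega
  -- the main induction
  have key : ∀ i, i ≤ q-2 →
      m ≤ (φ (2*i+1) ∩ (A (2*i+1) ∪ Z (2*i+1))).card + i * em := by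
    intro i
    induction i with
    | zero =>
      intro _
      obtain ⟨hs1, hc1⟩ := hsub 1 (by omega)
      rw [hL1] at hs1
      have hd01 : Disjoint M₁ (φ 1) := h0 ▸ hdis 0 (by omega)
      have hsub1 : φ 1 ⊆ A 1 ∪ Z 1 := by
        intro x hx
        have h := hs1 hx
        rw [Finset.union_assoc, Finset.mem_union] at h
        exact h.resolve_left (fun hM => Finset.disjoint_left.mp hd01 hM hx)
      have heq : φ (2*0+1) ∩ (A (2*0+1) ∪ Z (2*0+1)) = φ 1 := by
        norm_num
        exact hsub1
      rw [heq, hc1]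
      omega
    | succ i ih =>
      intro h
      exact Estep (i+1) (by omega) h (Bstep i (by omega) (ih (by omega)))
  -- conclude
  have hBfin := Bstep (q-2) (by omega) (key (q-2) le_rfl)
  rw [show 2*(q-2+1) = 2*q-2 from by omega, show q-2+1 = q-1 from by omega] at hBfin
  obtain ⟨hsp, hcp⟩ := hsub (2*q-1) (by omega)
  rw [hLpen, Finset.union_assoc] at hsp
  have hOddp : Odd (2*q-1) := by rw [Nat.odd_iff]; omega
  have hEvp : Even (2*q-2) := by rw [Nat.even_iff]; omega
  have hdp : Disjoint M₂ (φ (2*q-1)) := by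
    have h := hdis (2*q-1) (by omega)
    rw [show 2*q-1+1 = 2*q from by omega, hlast] at h
    exact h.symm
  have hsubBZ : φ (2*q-1) ⊆ B (2*q-2) ∪ Z (2*q-1) := by
    intro x hx
    have h := hsp hx
    rw [Finset.mem_union] at h
    exact h.resolve_left (fun hM => Finset.disjoint_left.mp hdp hM hx)
  have dBZfin : Disjoint (B (2*q-2)) (Z (2*q-1)) :=
    dBZ _ _ hEvp (by omega) (by omega) hOddp (by omega)
  have hsplit := split_card_aux _ _ _ hsubBZ dBZfin
  rw [hcp] at hsplit
  have hZle : (φ (2*q-1) ∩ Z (2*q-1)).card ≤ em := by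
    calc (φ (2*q-1) ∩ Z (2*q-1)).card ≤ (Z (2*q-1)).card :=
          Finset.card_le_card Finset.inter_subset_right
      _ = em := hZ _ hOddp (by omega)
  have hd2 : Disjoint (φ (2*q-2)) (φ (2*q-1)) := by
    have h := hdis (2*q-2) (by omega)
    rwa [show 2*q-2+1 = 2*q-1 from by omega] at h
  have hsubB : φ (2*q-1) ∩ B (2*q-2) ⊆ B (2*q-2) \ φ (2*q-2) := by
    intro x hx
    rw [Finset.mem_inter] at hx
    rw [Finset.mem_sdiff]
    exact ⟨hx.2, fun hxp => Finset.disjoint_left.mp hd2 hxp hx.1⟩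
  have hle := Finset.card_le_card hsubB
  have hsd : (B (2*q-2) ∩ φ (2*q-2)).card + (B (2*q-2) \ φ (2*q-2)).card = m := by
    rw [Finset.card_inter_add_card_sdiff, hB _ hEvp (by omega) (by omega)]
  rw [Finset.inter_comm] at hBfin
  have hmul : (q-1)*em + em = q*em := by
    rw [← Nat.succ_mul]
    congr 1
    omega
  have hq_lt : q * em < m := by
    have hq0 : (0:ℝ) < q := by exact_mod_cast (by omega : 0 < q)
    have h1 : ε * q < 1 := (lt_div_iff₀ hq0).mp hεq
    have hm0 : (0:ℝ) < m := by exact_mod_cast hm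
    have h2 : (q:ℝ) * em < m := by rw [hem]; nlinarith
    exact_mod_cast h2
  omega
end
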